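/- In the static logit panel model, the functional-differencing moment function built from two outcomes with the same sufficient statistic has zero conditional mean for every value of the fixed effect: let ȳ = (ȳ₀, ȳ₁) and ỹ = (ỹ₀, ỹ₁) with 0 ≤ ȳ₀, ỹ₀ ≤ T₀, 0 ≤ ȳ₁, ỹ₁ ≤ T₁, and ȳ₀ + ȳ₁ = ỹ₀ + ỹ₁; define r(θ) = (C(T₀, ȳ₀) · C(T₁, ȳ₁)) / (C(T₀, ỹ₀) · C(T₁, ỹ₁)) · exp(((ȳ₁ : ℝ) − ỹ₁) · θ) and m(y, θ) = 1{y = ȳ} − r(θ) · 1{y = ỹ}. Then for all α, θ ∈ ℝ, ∑_{y₀ = 0}^{T₀} ∑_{y₁ = 0}^{T₁} m((y₀, y₁), θ) · f((y₀, y₁) | α, θ) = 0. -/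

import Mathlib

/-!
Writing `F(u) = eᵘ / (1 + eᵘ)` and `1 - F(u) = 1 / (1 + eᵘ)`, the likelihood of `(y₀, y₁)` is
`C(T₀, y₀) C(T₁, y₁) exp(α (y₀ + y₁) + θ y₁)` divided by a normalising constant that does not depend
on the outcome. So the fixed effect enters only through the sufficient statistic `y₀ + y₁`: for two
outcomes `ȳ`, `ỹ` with the same sufficient statistic, `f(ȳ) = r(θ) f(ỹ)`, and the moment
`E[m(y, θ)] = f(ȳ) - r(θ) f(ỹ)` vanishes.
-/

/-- The standardized logistic cdf. -/
noncomputable def logisticCdf (u : ℝ) : ℝ := 1 / (1 + Real.exp (-u))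

/-- The static logit panel model likelihood of the outcome `y = (y₀, y₁)`
given fixed effect `α` and common parameter `θ`. -/
noncomputable def logitLik (T0 T1 : ℕ) (y : ℕ × ℕ) (α θ : ℝ) : ℝ :=
  (T0.choose y.1 : ℝ) * (1 - logisticCdf α) ^ (T0 - y.1) * logisticCdf α ^ y.1 *
  (T1.choose y.2 : ℝ) * (1 - logisticCdf (θ + α)) ^ (T1 - y.2) *
    logisticCdf (θ + α) ^ y.2

open Finset

theorem logisticCdf_eq (u : ℝ) : logisticCdf u = Real.exp u / (1 + Real.exp u) := by
  rw [logisticCdf, Real.exp_neg]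
  field_simp
  ring

theorem one_sub_logisticCdf (u : ℝ) : 1 - logisticCdf u = 1 / (1 + Real.exp u) := by
  rw [logisticCdf_eq]
  field_simp
  ring

theorem one_sub_logisticCdf_pow_mul_logisticCdf_pow {T k : ℕ} (hk : k ≤ T) (u : ℝ) :
    (1 - logisticCdf u) ^ (T - k) * logisticCdf u ^ k
      = Real.exp (k * u) / (1 + Real.exp u) ^ T := by
  rw [one_sub_logisticCdf, logisticCdf_eq, div_pow, div_pow, one_pow, div_mul_div_comm, one_mul,
    ← pow_add, Nat.sub_add_cancel hk, Real.exp_nat_mul]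

theorem logitLik_eq {T0 T1 : ℕ} {y : ℕ × ℕ} (h0 : y.1 ≤ T0) (h1 : y.2 ≤ T1) (α θ : ℝ) :
    logitLik T0 T1 y α θ
      = T0.choose y.1 * T1.choose y.2 * Real.exp (α * (y.1 + y.2) + θ * y.2)
          / ((1 + Real.exp α) ^ T0 * (1 + Real.exp (θ + α)) ^ T1) := by
  have hlik : logitLik T0 T1 y α θ = T0.choose y.1 * T1.choose y.2
      * ((1 - logisticCdf α) ^ (T0 - y.1) * logisticCdf α ^ y.1)
      * ((1 - logisticCdf (θ + α)) ^ (T1 - y.2) * logisticCdf (θ + α) ^ y.2) := by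
    rw [logitLik]
    ring
  rw [hlik, one_sub_logisticCdf_pow_mul_logisticCdf_pow h0,
    one_sub_logisticCdf_pow_mul_logisticCdf_pow h1, mul_assoc, div_mul_div_comm, ← Real.exp_add,
    ← mul_div_assoc]
  ring_nf

theorem logitLik_eq_mul_logitLik_of_add_eq {T0 T1 : ℕ} {a b : ℕ × ℕ}
    (ha0 : a.1 ≤ T0) (ha1 : a.2 ≤ T1) (hb0 : b.1 ≤ T0) (hb1 : b.2 ≤ T1)
    (hab : a.1 + a.2 = b.1 + b.2) (α θ : ℝ) :
    logitLik T0 T1 a α θ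
      = (T0.choose a.1 * T1.choose a.2 : ℝ) / (T0.choose b.1 * T1.choose b.2)
          * Real.exp ((a.2 - b.2 : ℝ) * θ) * logitLik T0 T1 b α θ := by
  have hb0' : (T0.choose b.1 : ℝ) ≠ 0 := by exact_mod_cast (Nat.choose_pos hb0).ne'
  have hb1' : (T1.choose b.2 : ℝ) ≠ 0 := by exact_mod_cast (Nat.choose_pos hb1).ne'
  have hexp : Real.exp (α * (a.1 + a.2) + θ * a.2)
      = Real.exp ((a.2 - b.2 : ℝ) * θ) * Real.exp (α * (b.1 + b.2) + θ * b.2) := by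
    have hab' : (a.1 + a.2 : ℝ) = b.1 + b.2 := by exact_mod_cast hab
    rw [← Real.exp_add]
    congr 1
    linear_combination α * hab'
  rw [logitLik_eq ha0 ha1, logitLik_eq hb0 hb1, hexp]
  field_simp

theorem sum_range_sum_range_ite_eq {M : Type*} [AddCommMonoid M] {T0 T1 : ℕ} (g : ℕ × ℕ → M)
    {p : ℕ × ℕ} (h0 : p.1 ≤ T0) (h1 : p.2 ≤ T1) :
    ∑ y0 ∈ range (T0 + 1), ∑ y1 ∈ range (T1 + 1), (if (y0, y1) = p then g (y0, y1) else 0)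
      = g p := by
  rw [← sum_product' (f := fun y0 y1 => if (y0, y1) = p then g (y0, y1) else 0), sum_ite_eq',
    if_pos (mem_product.2 ⟨mem_range.2 (by omega), mem_range.2 (by omega)⟩)]

theorem stmt_16_general (T0 T1 : ℕ)
    (yb yt : ℕ × ℕ)
    (hyb0 : yb.1 ≤ T0) (hyb1 : yb.2 ≤ T1)
    (hyt0 : yt.1 ≤ T0) (hyt1 : yt.2 ≤ T1)
    (hstat : yb.1 + yb.2 = yt.1 + yt.2)
    (r : ℝ → ℝ)
    (hr : ∀ θ, r θ =
      ((T0.choose yb.1 : ℝ) * (T1.choose yb.2 : ℝ)) /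
        ((T0.choose yt.1 : ℝ) * (T1.choose yt.2 : ℝ)) *
        Real.exp (((yb.2 : ℝ) - (yt.2 : ℝ)) * θ))
    (m : ℕ × ℕ → ℝ → ℝ)
    (hm : ∀ y θ, m y θ =
      (if y = yb then (1 : ℝ) else 0) - r θ * (if y = yt then (1 : ℝ) else 0)) :
    ∀ α θ : ℝ,
      ∑ y0 ∈ Finset.range (T0 + 1), ∑ y1 ∈ Finset.range (T1 + 1),
        m (y0, y1) θ * logitLik T0 T1 (y0, y1) α θ = 0 := by
  intro α θ
  simp only [hm, sub_mul, ite_mul, one_mul, zero_mul, mul_ite, mul_zero, mul_one, sum_sub_distrib]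
  rw [sum_range_sum_range_ite_eq (fun y => logitLik T0 T1 y α θ) hyb0 hyb1,
    sum_range_sum_range_ite_eq (fun y => r θ * logitLik T0 T1 y α θ) hyt0 hyt1, hr,
    logitLik_eq_mul_logitLik_of_add_eq hyb0 hyb1 hyt0 hyt1 hstat, sub_self]

/-- In the static logit panel model, the functional-differencing moment
function built from two outcomes with the same sufficient statistic has zero
conditional mean for every value of the fixed effect. -/
theorem stmt_16 (T0 T1 : ℕ) (hT0 : 0 < T0) (hT1 : 0 < T1)
    (yb yt : ℕ × ℕ)
    (hyb0 : yb.1 ≤ T0) (hyb1 : yb.2 ≤ T1)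
    (hyt0 : yt.1 ≤ T0) (hyt1 : yt.2 ≤ T1)
    (hstat : yb.1 + yb.2 = yt.1 + yt.2)
    (r : ℝ → ℝ)
    (hr : ∀ θ, r θ =
      ((T0.choose yb.1 : ℝ) * (T1.choose yb.2 : ℝ)) /
        ((T0.choose yt.1 : ℝ) * (T1.choose yt.2 : ℝ)) *
        Real.exp (((yb.2 : ℝ) - (yt.2 : ℝ)) * θ))
    (m : ℕ × ℕ → ℝ → ℝ)
    (hm : ∀ y θ, m y θ =
      (if y = yb then (1 : ℝ) else 0) - r θ * (if y = yt then (1 : ℝ) else 0)) :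
    ∀ α θ : ℝ,
      ∑ y0 ∈ Finset.range (T0 + 1), ∑ y1 ∈ Finset.range (T1 + 1),
        m (y0, y1) θ * logitLik T0 T1 (y0, y1) α θ = 0 :=
  stmt_16_general T0 T1 yb yt hyb0 hyb1 hyt0 hyt1 hstat r hr m hm
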